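/- arXiv:1711.00952 — 4 statements merged into one kernel-verified Lean document; each statement's English description precedes it below -/
import Mathlib

section
/- Let γ : [0,∞) → ℝ be a C¹ function with sup_{t≥0} γ'(t) = C < ∞, and let (t_k) be a sequence of positive reals with t_k → ∞ and γ(t_k) → ∞. Then there exists a sequence (t̃_k) such that t̃_k → ∞, γ(t̃_k) → ∞, and for every k and every t ∈ [0, k], γ(t + t̃_k) ≥ γ(t̃_k). -/
/-!
Fix `k`. Pick times `a ≤ b` from the sequence with `γ a ≥ k` and `γ b > γ a + C⁺ k`, and let
`s` be the last time in `[a, b]` at which `γ` is at most `γ a`. Then `γ s = γ a ≥ k` and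
`γ > γ s` on `(s, b]`, while the slope bound `γ' ≤ C⁺` forces the climb from `γ s` to `γ b` to
take longer than `k`, so `[s, s + k] ⊆ [s, b]`.
-/

open Filter Set

theorem ContinuousOn.exists_eq_forall_Icc_le {γ : ℝ → ℝ} {a b : ℝ}
    (hγ : ContinuousOn γ (Icc a b)) (hab : a ≤ b) (hγab : γ a < γ b) :
    ∃ s ∈ Ico a b, γ s = γ a ∧ ∀ x ∈ Icc s b, γ a ≤ γ x := by
  set A := Icc a b ∩ γ ⁻¹' Iic (γ a)
  have haA : a ∈ A := ⟨⟨le_rfl, hab⟩, (le_rfl : γ a ≤ γ a)⟩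
  have hAbdd : BddAbove A := ⟨b, fun x hx => hx.1.2⟩
  obtain ⟨⟨has, hsb⟩, hγs_le⟩ : sSup A ∈ A :=
    (hγ.preimage_isClosed_of_isClosed isClosed_Icc isClosed_Iic).csSup_mem ⟨a, haA⟩ hAbdd
  set s := sSup A
  have hsb_lt : s < b := hsb.lt_of_ne fun h => by rw [h] at hγs_le; exact (not_le.2 hγab) hγs_le
  have hgt : ∀ x ∈ Ioc s b, γ a < γ x := fun x hx => by
    by_contra! hx'
    exact (le_csSup hAbdd ⟨⟨has.trans hx.1.le, hx.2⟩, hx'⟩).not_gt hx.1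
  have hγs_ge : γ a ≤ γ s := by
    have hcont : ContinuousWithinAt γ (Ioc s b) s :=
      (hγ s ⟨has, hsb⟩).mono fun x hx => ⟨has.trans hx.1.le, hx.2⟩
    refine ContinuousWithinAt.closure_le ?_ continuousWithinAt_const hcont fun x hx => (hgt x hx).le
    rw [closure_Ioc hsb_lt.ne]
    exact left_mem_Icc.2 hsb_lt.le
  refine ⟨s, ⟨has, hsb_lt⟩, le_antisymm hγs_le hγs_ge, fun x hx => ?_⟩
  rcases hx.1.eq_or_lt with rfl | hsx
  · exact hγs_ge
  · exact (hgt x ⟨hsx, hx.2⟩).le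

theorem exists_forall_Icc_le_add_of_deriv_le {γ : ℝ → ℝ} {a b C k : ℝ}
    (hγ : DifferentiableOn ℝ γ (Ici a)) (hC : ∀ x ∈ Ioi a, deriv γ x ≤ C) (hC0 : 0 ≤ C)
    (hk : 0 ≤ k) (hab : a ≤ b) (hb : γ a + C * k < γ b) :
    ∃ s, a ≤ s ∧ γ s = γ a ∧ ∀ u ∈ Icc 0 k, γ s ≤ γ (u + s) := by
  obtain ⟨s, ⟨has, hsb⟩, hγs, hle⟩ :=
    (hγ.continuousOn.mono Icc_subset_Ici_self).exists_eq_forall_Icc_le hab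
      (by linarith [mul_nonneg hC0 hk] : γ a < γ b)
  have hslope : γ b - γ s ≤ C * (b - s) :=
    (convex_Ici a).image_sub_le_mul_sub_of_deriv_le hγ.continuousOn (hγ.mono interior_subset)
      (fun x hx => hC x (by rwa [interior_Ici] at hx)) s has b (has.trans hsb.le) hsb.le
  have hkb : s + k < b := by
    have : C * k < C * (b - s) := by linarith
    linarith [lt_of_mul_lt_mul_left this hC0]
  exact ⟨s, has, hγs, fun u hu => hγs ▸ hle _ ⟨by linarith [hu.1], by linarith [hu.2]⟩⟩

theorem stmt_0_general (γ : ℝ → ℝ) (C : ℝ)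
    (hγ : ContDiff ℝ 1 γ)
    (hC : ∀ t : ℝ, 0 ≤ t → deriv γ t ≤ C)
    (t : ℕ → ℝ)
    (ht : Tendsto t atTop atTop)
    (hγt : Tendsto (fun k => γ (t k)) atTop atTop) :
    ∃ s : ℕ → ℝ,
      Tendsto s atTop atTop ∧
      Tendsto (fun k => γ (s k)) atTop atTop ∧
      ∀ k : ℕ, ∀ u ∈ Set.Icc (0 : ℝ) (k : ℝ), γ (s k) ≤ γ (u + s k) := by
  have hstep : ∀ k : ℕ, ∃ s : ℝ, (k : ℝ) ≤ s ∧ (k : ℝ) ≤ γ s ∧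
      ∀ u ∈ Icc (0 : ℝ) k, γ s ≤ γ (u + s) := by
    intro k
    obtain ⟨n, htn, hγn⟩ :=
      ((ht.eventually_ge_atTop (k : ℝ)).and (hγt.eventually_ge_atTop (k : ℝ))).exists
    obtain ⟨m, htm, hγm⟩ := ((ht.eventually_ge_atTop (t n)).and
      (hγt.eventually_gt_atTop (γ (t n) + max C 0 * k))).exists
    have hk : (0 : ℝ) ≤ k := k.cast_nonneg
    obtain ⟨s, hns, hγs, hs⟩ := exists_forall_Icc_le_add_of_deriv_le
      (hγ.differentiable one_ne_zero).differentiableOn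
      (fun x hx => (hC x (by linarith [mem_Ioi.1 hx])).trans (le_max_left C 0))
      (le_max_right C 0) hk htm hγm
    exact ⟨s, htn.trans hns, hγs ▸ hγn, hs⟩
  choose s hks hkγs hs using hstep
  exact ⟨s, tendsto_atTop_mono hks tendsto_natCast_atTop_atTop,
    tendsto_atTop_mono hkγs tendsto_natCast_atTop_atTop, hs⟩

theorem stmt_0 (γ : ℝ → ℝ) (C : ℝ)
    (hγ : ContDiff ℝ 1 γ)
    (hC : ∀ t : ℝ, 0 ≤ t → deriv γ t ≤ C)
    (t : ℕ → ℝ) (ht_pos : ∀ k, 0 < t k)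
    (ht : Tendsto t atTop atTop)
    (hγt : Tendsto (fun k => γ (t k)) atTop atTop) :
    ∃ s : ℕ → ℝ,
      Tendsto s atTop atTop ∧
      Tendsto (fun k => γ (s k)) atTop atTop ∧
      ∀ k : ℕ, ∀ u ∈ Set.Icc (0 : ℝ) (k : ℝ), γ (s k) ≤ γ (u + s k) :=
  stmt_0_general γ C hγ hC t ht hγt
end

section
/- Let f : ℝ → ℝ be continuous with f(u) < 0 for all u ∈ (q, b), where q < b. Suppose β : ℝ → ℝ is differentiable and satisfies β'(t) = f(β(t)) and β'(t) ≥ 0 for all t ∈ ℝ, together with β(t) ≥ q for all t and β(0) < b. Then β(t) ≤ q for all t ∈ ℝ, i.e. β ≡ q. -/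
/-!
Since `β' = f ∘ β ≥ 0` while `f < 0` on `(q, b)`, the solution never enters `(q, b)`; as
`β 0 ∈ [q, b)`, this forces `β 0 = q`. The range of `β` is connected, contains `q`, lies in
`[q, ∞)` and misses `(q, b)`, so it cannot reach past the gap: it is `{q}`.
-/

open Set

theorem IsPreconnected.subset_singleton_of_disjoint_Ioo {s : Set ℝ} {q b : ℝ} (hs : IsPreconnected s)
    (hqb : q < b) (hq : q ∈ s) (hsq : s ⊆ Ici q) (hgap : Disjoint s (Ioo q b)) : s ⊆ {q} := by
  intro x hx
  by_contra hxq
  have hqx : q < x := lt_of_le_of_ne (hsq hx) (Ne.symm hxq)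
  have hbx : b ≤ x := le_of_not_gt fun hxb => disjoint_left.1 hgap hx ⟨hqx, hxb⟩
  have hmid : (q + b) / 2 ∈ s := hs.Icc_subset hq hx ⟨by linarith, by linarith⟩
  exact disjoint_left.1 hgap hmid ⟨by linarith, by linarith⟩

theorem stmt_7_general (f : ℝ → ℝ) (q b : ℝ) (hqb : q < b)
    (hfneg : ∀ u ∈ Set.Ioo q b, f u < 0)
    (β : ℝ → ℝ)
    (hβ : ∀ t : ℝ, HasDerivAt β (f (β t)) t)
    (hβ' : ∀ t : ℝ, 0 ≤ f (β t))
    (hβq : ∀ t : ℝ, q ≤ β t)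
    (hβ0 : β 0 < b) :
    ∀ t : ℝ, β t = q := by
  have hcont : Continuous β := continuous_iff_continuousAt.2 fun t => (hβ t).continuousAt
  have hgap : Disjoint (range β) (Ioo q b) := by
    refine disjoint_left.2 ?_
    rintro _ ⟨t, rfl⟩ ht
    exact (hfneg _ ht).not_ge (hβ' t)
  have hβ0q : β 0 = q :=
    (hβq 0).eq_or_lt.elim Eq.symm fun hq => absurd ⟨hq, hβ0⟩ (disjoint_left.1 hgap (mem_range_self 0))
  intro t
  exact (isPreconnected_range hcont).subset_singleton_of_disjoint_Ioo hqb (hβ0q ▸ mem_range_self 0)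
    (range_subset_iff.2 hβq) hgap (mem_range_self t)

theorem stmt_7 (f : ℝ → ℝ) (q b : ℝ) (hqb : q < b)
    (hf : Continuous f)
    (hfneg : ∀ u ∈ Set.Ioo q b, f u < 0)
    (β : ℝ → ℝ)
    (hβ : ∀ t : ℝ, HasDerivAt β (f (β t)) t)
    (hβ' : ∀ t : ℝ, 0 ≤ f (β t))
    (hβq : ∀ t : ℝ, q ≤ β t)
    (hβ0 : β 0 < b) :
    ∀ t : ℝ, β t = q :=
  stmt_7_general f q b hqb hfneg β hβ hβ' hβq hβ0
end

section
/- Let q_* < q < q^* be reals and f : ℝ → ℝ be C¹ with f(q^*) = 0 and f'(q^*) < 0. Suppose P : (q_*, q^*) → ℝ and P₁ : (q, q^*) → ℝ are C¹, strictly negative on the interiors of their domains, satisfy dP/dv = −c − f(v)/P(v) on (q_*, q^*) and dP₁/dv = −c₁ − f(v)/P₁(v) on (q, q^*), and extend continuously with P(q_*) = P(q^*) = 0 and P₁(q) = P₁(q^*) = 0. If additionally the integral ∫_{q̄}^{v} (−f(s))/(P₁(s)P(s)) ds converges as v ↑ q^* for some fixed q̄ ∈ (q, q^*), then c₁ > c.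 -/
/-!
Suppose `c₁ ≤ c`. The difference `W = P₁ - P` of the two Riccati solutions satisfies the linear
equation `W' = (c - c₁) - h W` with `h = -f / (P₁ P)`, so with `I = ∫_{q̄}^v h` the function
`exp I · W` has derivative `(c - c₁) exp I ≥ 0` on `(q, q^*)` and is nondecreasing there.
Near `q` it is positive, since `W(q) = -P(q) > 0`; but as `v ↑ q^*` the convergence of the integral
keeps `exp I` bounded while `W → 0`, so it tends to `0`. This is a contradiction.
-/

open Filter Set intervalIntegral Topology

section Order

variable {α β : Type*} [LinearOrder α] [TopologicalSpace α] [OrderTopology α] [DenselyOrdered α]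
  [TopologicalSpace β]

theorem MonotoneOn.le_of_tendsto_nhdsLT [Preorder β] [OrderClosedTopology β] {g : α → β}
    {a b x : α} {l : β} (hg : MonotoneOn g (Ioo a b)) (hlim : Tendsto g (𝓝[<] b) (𝓝 l))
    (hx : x ∈ Ioo a b) : g x ≤ l :=
  have := nhdsLT_neBot_of_exists_lt ⟨a, hx.1.trans hx.2⟩
  ge_of_tendsto hlim <| by
    filter_upwards [Ioo_mem_nhdsLT hx.2] with v hv
    exact hg hx ⟨hx.1.trans hv.1, hv.2⟩ hv.1.le

theorem ContinuousOn.exists_mem_Ioo_lt [LinearOrder β] [OrderClosedTopology β] {g : α → β}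
    {a b : α} {y : β} (hg : ContinuousOn g (Icc a b)) (hab : a < b) (hy : y < g a) :
    ∃ x ∈ Ioo a b, y < g x := by
  have := nhdsGT_neBot_of_exists_gt ⟨b, hab⟩
  have hlim := (hg a ⟨le_rfl, hab.le⟩).mono_of_mem_nhdsWithin (Icc_mem_nhdsGT hab)
  obtain ⟨x, hyx, hx⟩ :=
    ((hlim.eventually (eventually_gt_nhds hy)).and (Ioo_mem_nhdsGT hab)).exists
  exact ⟨x, hx, hyx⟩

end Order

theorem monotoneOn_Ioo_of_hasDerivAt_nonneg {g g' : ℝ → ℝ} {a b : ℝ}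
    (hg : ∀ x ∈ Ioo a b, HasDerivAt g (g' x) x) (hg' : ∀ x ∈ Ioo a b, 0 ≤ g' x) :
    MonotoneOn g (Ioo a b) :=
  monotoneOn_of_hasDerivWithinAt_nonneg (convex_Ioo a b)
    (fun x hx => (hg x hx).continuousAt.continuousWithinAt)
    (by simpa only [interior_Ioo] using fun x hx => (hg x hx).hasDerivWithinAt)
    (by simpa only [interior_Ioo] using hg')

theorem ContinuousOn.hasDerivAt_integral_of_mem_Ioo {h : ℝ → ℝ} {a b x₀ v : ℝ}
    (hh : ContinuousOn h (Ioo a b)) (hx₀ : x₀ ∈ Ioo a b) (hv : v ∈ Ioo a b) :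
    HasDerivAt (fun u => ∫ s in x₀..u, h s) (h v) v :=
  integral_hasDerivAt_right
    ((hh.mono (ordConnected_Ioo.uIcc_subset hx₀ hv)).intervalIntegrable)
    (hh.stronglyMeasurableAtFilter isOpen_Ioo v hv)
    (hh.continuousAt (isOpen_Ioo.mem_nhds hv))

theorem HasDerivAt.exp_mul_of_linear {I W : ℝ → ℝ} {h a v : ℝ} (hI : HasDerivAt I h v)
    (hW : HasDerivAt W (a - h * W v) v) :
    HasDerivAt (fun u => Real.exp (I u) * W u) (a * Real.exp (I v)) v :=
  (hI.exp.mul hW).congr_deriv (by ring)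

theorem HasDerivAt.sub_of_riccati {P Q : ℝ → ℝ} {F c d v : ℝ}
    (hP : HasDerivAt P (-c - F / P v) v) (hQ : HasDerivAt Q (-d - F / Q v) v)
    (hPv : P v ≠ 0) (hQv : Q v ≠ 0) :
    HasDerivAt (fun u => Q u - P u) ((c - d) - -F / (Q v * P v) * (Q v - P v)) v :=
  (hQ.sub hP).congr_deriv (by field_simp; ring)

theorem stmt_10_general (f : ℝ → ℝ) (hf : ContDiff ℝ 1 f)
    (qs q qstar : ℝ) (hq1 : qs < q) (hq2 : q < qstar)
    (P P₁ : ℝ → ℝ) (c c₁ : ℝ)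
    (hPneg : ∀ v ∈ Set.Ioo qs qstar, P v < 0)
    (hP₁neg : ∀ v ∈ Set.Ioo q qstar, P₁ v < 0)
    (hP : ∀ v ∈ Set.Ioo qs qstar, HasDerivAt P (-c - f v / P v) v)
    (hP₁ : ∀ v ∈ Set.Ioo q qstar, HasDerivAt P₁ (-c₁ - f v / P₁ v) v)
    (hPcont : ContinuousOn P (Set.Icc qs qstar))
    (hP₁cont : ContinuousOn P₁ (Set.Icc q qstar))
    (hPqstar : P qstar = 0)
    (hP₁q : P₁ q = 0) (hP₁qstar : P₁ qstar = 0)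
    (qbar : ℝ) (hqbar : qbar ∈ Set.Ioo q qstar)
    (hconv : ∃ L : ℝ, Tendsto (fun v => ∫ s in qbar..v, (-f s) / (P₁ s * P s))
      (nhdsWithin qstar (Set.Iio qstar)) (nhds L)) :
    c < c₁ := by
  by_contra! hc
  obtain ⟨L, hL⟩ := hconv
  have hsub : Ioo q qstar ⊆ Ioo qs qstar := Ioo_subset_Ioo_left hq1.le
  have hWcont : ContinuousOn (fun v => P₁ v - P v) (Icc q qstar) :=
    hP₁cont.sub (hPcont.mono (Icc_subset_Icc_left hq1.le))
  have hcont : ContinuousOn (fun s => -f s / (P₁ s * P s)) (Ioo q qstar) :=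
    hf.continuous.neg.continuousOn.div
      ((hP₁cont.mono Ioo_subset_Icc_self).mul (hPcont.mono (hsub.trans Ioo_subset_Icc_self)))
      fun v hv => (mul_pos_of_neg_of_neg (hP₁neg v hv) (hPneg v (hsub hv))).ne'
  set I := fun v => ∫ s in qbar..v, -f s / (P₁ s * P s)
  set g := fun v => Real.exp (I v) * (P₁ v - P v)
  have hg' : ∀ v ∈ Ioo q qstar, HasDerivAt g ((c - c₁) * Real.exp (I v)) v := fun v hv =>
    (hcont.hasDerivAt_integral_of_mem_Ioo hqbar hv).exp_mul_of_linear
      ((hP v (hsub hv)).sub_of_riccati (hP₁ v hv) (hPneg v (hsub hv)).ne (hP₁neg v hv).ne)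
  have hmono : MonotoneOn g (Ioo q qstar) := monotoneOn_Ioo_of_hasDerivAt_nonneg hg'
    fun v _ => mul_nonneg (sub_nonneg.2 hc) (Real.exp_pos _).le
  have hlim : Tendsto g (𝓝[<] qstar) (𝓝 0) := by
    have hW := (hWcont qstar ⟨hq2.le, le_rfl⟩).mono_of_mem_nhdsWithin (Icc_mem_nhdsLT hq2)
    simpa [hP₁qstar, hPqstar] using ((Real.continuous_exp.tendsto L).comp hL).mul hW
  obtain ⟨v₀, hv₀, hpos⟩ := hWcont.exists_mem_Ioo_lt hq2 (y := 0)
    (by simpa [hP₁q] using hPneg q ⟨hq1, hq2⟩)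
  exact (mul_pos (Real.exp_pos _) hpos).not_ge (hmono.le_of_tendsto_nhdsLT hlim hv₀)

theorem stmt_10 (f : ℝ → ℝ) (hf : ContDiff ℝ 1 f)
    (qs q qstar : ℝ) (hq1 : qs < q) (hq2 : q < qstar)
    (hfq : f qstar = 0) (hf' : deriv f qstar < 0)
    (P P₁ : ℝ → ℝ) (c c₁ : ℝ)
    (hPneg : ∀ v ∈ Set.Ioo qs qstar, P v < 0)
    (hP₁neg : ∀ v ∈ Set.Ioo q qstar, P₁ v < 0)
    (hP : ∀ v ∈ Set.Ioo qs qstar, HasDerivAt P (-c - f v / P v) v)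
    (hP₁ : ∀ v ∈ Set.Ioo q qstar, HasDerivAt P₁ (-c₁ - f v / P₁ v) v)
    (hPcont : ContinuousOn P (Set.Icc qs qstar))
    (hP₁cont : ContinuousOn P₁ (Set.Icc q qstar))
    (hPqs : P qs = 0) (hPqstar : P qstar = 0)
    (hP₁q : P₁ q = 0) (hP₁qstar : P₁ qstar = 0)
    (qbar : ℝ) (hqbar : qbar ∈ Set.Ioo q qstar)
    (hconv : ∃ L : ℝ, Tendsto (fun v => ∫ s in qbar..v, (-f s) / (P₁ s * P s))
      (nhdsWithin qstar (Set.Iio qstar)) (nhds L)) :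
    c < c₁ :=
  stmt_10_general f hf qs q qstar hq1 hq2 P P₁ c c₁ hPneg hP₁neg hP hP₁ hPcont hP₁cont hPqstar hP₁q
    hP₁qstar qbar hqbar hconv
end

section
/- Let q_j < q_i be reals and f : ℝ → ℝ continuous. Suppose w : ℝ² → ℝ is a C² solution of w_t = w_{rr} + f(w) on ℝ² with w_t(r,t) > 0 and w_r(r,t) < 0 for all (r,t), lim_{r→−∞} w(r,t) = q_i and lim_{r→+∞} w(r,t) = q_j for each t, and such that the integrals below converge. Then ∫_{q_j}^{q_i} f(u) du = −∫_{−∞}^{+∞} w_t(r,t) w_r(r,t) dr > 0, and moreover ∫_{q_j}^{z} f(u) du < ∫_{q_j}^{q_i} f(u) du for every z ∈ (q_j, q_i). -/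
/-!
Along a time slice `u = w(·, t)` the equation reads `u'' + f(u) = w_t`, so the energy
`E = u'²/2 + ∫_{q_j}^{u} f` satisfies `E' = w_t u' < 0`. Since `u' → 0` at both ends,
`E(-∞) = ∫_{q_j}^{q_i} f` and `E(+∞) = 0`, which gives the identity and its positivity. If
`u(r) = z`, integrating `E'` over `(-∞, r]` gives `u'(r)²/2 + ∫_{q_j}^{z} f ≤ ∫_{q_j}^{q_i} f`,
and `u'(r) ≠ 0` makes this strict.
-/

open Filter MeasureTheory intervalIntegral Topology

theorem MeasureTheory.integral_neg_of_forall_neg {α : Type*} [MeasurableSpace α] {μ : Measure α}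
    [NeZero μ] {g : α → ℝ} (hg : Integrable g μ) (hneg : ∀ x, g x < 0) : ∫ x, g x ∂μ < 0 := by
  have hsupp : Function.support (-g) = Set.univ :=
    Set.eq_univ_of_forall fun x => neg_ne_zero.mpr (hneg x).ne
  have hpos : 0 < ∫ x, (-g) x ∂μ := by
    rw [integral_pos_iff_support_of_nonneg (f := -g) (fun x => neg_nonneg.mpr (hneg x).le) hg.neg,
      hsupp]
    exact Measure.measure_univ_pos.mpr (NeZero.ne μ)
  simpa [integral_neg] using hpos

namespace ReactionDiffusion

noncomputable def energy (f : ℝ → ℝ) (a : ℝ) (u : ℝ → ℝ) (r : ℝ) : ℝ :=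
  deriv u r ^ 2 / 2 + ∫ s in a..u r, f s

variable {f : ℝ → ℝ} {a : ℝ} {u v : ℝ → ℝ}

theorem hasDerivAt_energy (hf : Continuous f) (hu : ContDiff ℝ 2 u) (r : ℝ) :
    HasDerivAt (energy f a u) (deriv u r * (deriv (deriv u) r + f (u r))) r := by
  have hu'' : HasDerivAt (deriv u) (deriv (deriv u) r) r :=
    (hu.differentiable_deriv_two r).hasDerivAt
  have hF : HasDerivAt (fun z => ∫ s in a..z, f s) (f (u r)) (u r) :=
    (hf.integral_hasStrictDerivAt a (u r)).hasDerivAt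
  exact (((hu''.pow 2).div_const 2).add
    (hF.comp r (hu.differentiable two_ne_zero r).hasDerivAt)).congr_deriv (by norm_num; ring)

theorem tendsto_energy (hf : Continuous f) {l : Filter ℝ} {q : ℝ}
    (hu : Tendsto u l (𝓝 q)) (hu' : Tendsto (deriv u) l (𝓝 0)) :
    Tendsto (energy f a u) l (𝓝 (∫ s in a..q, f s)) := by
  have hF : Continuous (fun z => ∫ s in a..z, f s) :=
    continuous_primitive (fun _ _ => hf.intervalIntegrable _ _) a
  have h := ((hu'.pow 2).div_const 2).add ((hF.tendsto q).comp hu)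
  rwa [zero_pow two_ne_zero, zero_div, zero_add] at h

section Profile

variable {q_i q_j : ℝ} (hf : Continuous f) (hu : ContDiff ℝ 2 u)
  (hv : ∀ r, v r = deriv (deriv u) r + f (u r))

include hf hu hv

theorem hasDerivAt_energy_of_eq (r : ℝ) : HasDerivAt (energy f a u) (v r * deriv u r) r := by
  simpa [hv r, mul_comm] using hasDerivAt_energy (a := a) hf hu r

theorem integral_mul_deriv_eq_neg_integral (hint : Integrable fun r => v r * deriv u r)
    (hbot : Tendsto u atBot (𝓝 q_i)) (htop : Tendsto u atTop (𝓝 q_j))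
    (hu'bot : Tendsto (deriv u) atBot (𝓝 0)) (hu'top : Tendsto (deriv u) atTop (𝓝 0)) :
    ∫ r, v r * deriv u r = -∫ s in q_j..q_i, f s := by
  rw [integral_of_hasDerivAt_of_tendsto (hasDerivAt_energy_of_eq hf hu hv) hint
    (tendsto_energy hf hbot hu'bot) (tendsto_energy hf htop hu'top), integral_same, zero_sub]

theorem energy_le_of_mul_deriv_nonpos (hint : Integrable fun r => v r * deriv u r)
    (hnonpos : ∀ r, v r * deriv u r ≤ 0)
    (hbot : Tendsto u atBot (𝓝 q_i)) (hu'bot : Tendsto (deriv u) atBot (𝓝 0)) (r : ℝ) :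
    energy f a u r ≤ ∫ s in a..q_i, f s := by
  have h := integral_Iic_of_hasDerivAt_of_tendsto' (a := r)
    (fun x _ => hasDerivAt_energy_of_eq (a := a) hf hu hv x) hint.integrableOn
    (tendsto_energy hf hbot hu'bot)
  have := setIntegral_nonpos (μ := volume) (s := Set.Iic r) measurableSet_Iic fun x _ => hnonpos x
  linarith

theorem integral_lt_of_deriv_ne_zero (hint : Integrable fun r => v r * deriv u r)
    (hnonpos : ∀ r, v r * deriv u r ≤ 0)
    (hbot : Tendsto u atBot (𝓝 q_i)) (hu'bot : Tendsto (deriv u) atBot (𝓝 0)) {r : ℝ}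
    (hr : deriv u r ≠ 0) :
    ∫ s in a..u r, f s < ∫ s in a..q_i, f s := by
  have h := energy_le_of_mul_deriv_nonpos (a := a) hf hu hv hint hnonpos hbot hu'bot r
  rw [energy] at h
  linarith [sq_pos_of_ne_zero hr]

end Profile

end ReactionDiffusion

open ReactionDiffusion

theorem stmt_16_general (f : ℝ → ℝ) (hf : Continuous f)
    (q_i q_j : ℝ)
    (w : ℝ → ℝ → ℝ)
    (hw : ContDiff ℝ 2 (fun p : ℝ × ℝ => w p.1 p.2))
    (heq : ∀ r t : ℝ, deriv (fun s => w r s) t =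
      deriv (fun x => deriv (fun x' => w x' t) x) r + f (w r t))
    (hwt : ∀ r t : ℝ, 0 < deriv (fun s => w r s) t)
    (hwr : ∀ r t : ℝ, deriv (fun x => w x t) r < 0)
    (hbot : ∀ t : ℝ, Tendsto (fun r => w r t) atBot (nhds q_i))
    (htop : ∀ t : ℝ, Tendsto (fun r => w r t) atTop (nhds q_j))
    (hwrbot : ∀ t : ℝ, Tendsto (fun r => deriv (fun x => w x t) r) atBot (nhds 0))
    (hwrtop : ∀ t : ℝ, Tendsto (fun r => deriv (fun x => w x t) r) atTop (nhds 0))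
    (hint : ∀ t : ℝ, Integrable
      (fun r => deriv (fun s => w r s) t * deriv (fun x => w x t) r)) :
    (∀ t : ℝ, (∫ u in q_j..q_i, f u) =
        -∫ r : ℝ, deriv (fun s => w r s) t * deriv (fun x => w x t) r) ∧
    (0 < ∫ u in q_j..q_i, f u) ∧
    (∀ z ∈ Set.Ioo q_j q_i, (∫ u in q_j..z, f u) < ∫ u in q_j..q_i, f u) := by
  have hslice : ∀ t, ContDiff ℝ 2 (fun x => w x t) := fun t =>
    hw.comp (contDiff_id.prodMk contDiff_const)
  have hneg : ∀ t r, deriv (fun s => w r s) t * deriv (fun x => w x t) r < 0 :=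
    fun t r => mul_neg_of_pos_of_neg (hwt r t) (hwr r t)
  have hflux : ∀ t, (∫ u in q_j..q_i, f u) =
      -∫ r, deriv (fun s => w r s) t * deriv (fun x => w x t) r := fun t => by
    rw [integral_mul_deriv_eq_neg_integral hf (hslice t) (heq · t) (hint t) (hbot t) (htop t)
      (hwrbot t) (hwrtop t), neg_neg]
  refine ⟨hflux, ?_, fun z hz => ?_⟩
  · rw [hflux 0, neg_pos]
    exact integral_neg_of_forall_neg (hint 0) (hneg 0)
  · obtain ⟨r, rfl⟩ : z ∈ Set.range (fun x => w x 0) :=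
      mem_range_of_exists_le_of_exists_ge (hslice 0).continuous
        (((htop 0).eventually (eventually_lt_nhds hz.1)).exists.imp fun _ => le_of_lt)
        (((hbot 0).eventually (eventually_gt_nhds hz.2)).exists.imp fun _ => le_of_lt)
    exact integral_lt_of_deriv_ne_zero hf (hslice 0) (heq · 0) (hint 0) (fun r => (hneg 0 r).le)
      (hbot 0) (hwrbot 0) (hwr r 0).ne

theorem stmt_16 (f : ℝ → ℝ) (hf : Continuous f)
    (q_i q_j : ℝ) (hq : q_j < q_i)
    (w : ℝ → ℝ → ℝ)
    (hw : ContDiff ℝ 2 (fun p : ℝ × ℝ => w p.1 p.2))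
    (heq : ∀ r t : ℝ, deriv (fun s => w r s) t =
      deriv (fun x => deriv (fun x' => w x' t) x) r + f (w r t))
    (hwt : ∀ r t : ℝ, 0 < deriv (fun s => w r s) t)
    (hwr : ∀ r t : ℝ, deriv (fun x => w x t) r < 0)
    (hbot : ∀ t : ℝ, Tendsto (fun r => w r t) atBot (nhds q_i))
    (htop : ∀ t : ℝ, Tendsto (fun r => w r t) atTop (nhds q_j))
    (hwrbot : ∀ t : ℝ, Tendsto (fun r => deriv (fun x => w x t) r) atBot (nhds 0))
    (hwrtop : ∀ t : ℝ, Tendsto (fun r => deriv (fun x => w x t) r) atTop (nhds 0))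
    (hint : ∀ t : ℝ, Integrable
      (fun r => deriv (fun s => w r s) t * deriv (fun x => w x t) r)) :
    (∀ t : ℝ, (∫ u in q_j..q_i, f u) =
        -∫ r : ℝ, deriv (fun s => w r s) t * deriv (fun x => w x t) r) ∧
    (0 < ∫ u in q_j..q_i, f u) ∧
    (∀ z ∈ Set.Ioo q_j q_i, (∫ u in q_j..z, f u) < ∫ u in q_j..q_i, f u) :=
  stmt_16_general f hf q_i q_j w hw heq hwt hwr hbot htop hwrbot hwrtop hint
end
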